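/- arXiv:2501.11364 — 3 statements merged into one kernel-verified Lean document; each statement's English description precedes it below -/
import Mathlib

section
/- Let β = (β₁,...,βₙ) with 1 > |β₁| ≥ ... ≥ |βₙ| > 0, and let G^r_β be the set of β sub-resonant polynomial transformations of ℂⁿ. Then G^r_β is closed under composition: if P, P̃ ∈ G^r_β then P̃ ∘ P ∈ G^r_β. -/
open Finset

noncomputable section

/-- `bpow β p = ∏ᵢ βᵢ ^ pᵢ`. -/
def bpow {n : ℕ} (β : Fin n → ℂ) (p : Fin n → ℕ) : ℂ := ∏ i, β i ^ p i

/-- `𝒫ⱼ`: the set of resonances of `βⱼ`, i.e. `p ∈ ℕⁿ` with `βⱼ = β^p` and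
`p ≠ eₖ` for all `k ≥ j`. -/
def resSet {n : ℕ} (β : Fin n → ℂ) (j : Fin n) : Set (Fin n → ℕ) :=
  {p | β j = bpow β p ∧ ∀ k : Fin n, j ≤ k → p ≠ fun i => if i = k then 1 else 0}

/-- `𝒬ⱼ`: the set of nonzero multi-indices componentwise bounded by some
resonance of `βⱼ`. -/
def subResSet {n : ℕ} (β : Fin n → ℂ) (j : Fin n) : Set (Fin n → ℕ) :=
  {q | q ≠ 0 ∧ ∃ p ∈ resSet β j, ∀ l, q l ≤ p l}

/-- A map `P : ℂⁿ → ℂⁿ` is β sub-resonant if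
`P(z) = (a₁z₁, a₂z₂ + P₂(z₁), ..., aₙzₙ + Pₙ(z₁,...,z_{n-1}))` with all `aⱼ ≠ 0`
and each `Pⱼ` a linear combination of monomials `z^q` with `q ∈ 𝒬ⱼ` depending
only on the variables `z₁, ..., z_{j-1}`. -/
def IsSubResonant {n : ℕ} (β : Fin n → ℂ) (P : (Fin n → ℂ) → (Fin n → ℂ)) : Prop :=
  ∃ (a : Fin n → ℂ) (c : Fin n → ((Fin n → ℕ) →₀ ℂ)),
    (∀ j, a j ≠ 0) ∧
    (∀ j q, c j q ≠ 0 → q ∈ subResSet β j ∧ ∀ i, j ≤ i → q i = 0) ∧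
    ∀ (z : Fin n → ℂ) (j : Fin n),
      P z j = a j * z j + (c j).sum fun q coef => coef * ∏ i, z i ^ q i

/-!
Write `Pⱼ = aⱼ zⱼ + Sⱼ` and `P̃ⱼ = bⱼ zⱼ + T̃ⱼ` with polynomials `Sⱼ`, `T̃ⱼ`; then
`(P̃ ∘ P)ⱼ = bⱼ aⱼ zⱼ + bⱼ Sⱼ + T̃ⱼ(P₁, …, Pₙ)`. Every exponent occurring in `Pᵢ` is bounded by an
exponent `p` of weight `β^p = βᵢ`, and such bounds add up under multiplication; so an exponent
`r` of `T̃ⱼ(P)` coming from the monomial `z^q` of `T̃ⱼ` is bounded by some `p'` with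
`β^p' = β^q`. If `q ≤ p ∈ 𝒫ⱼ`, then `r ≤ p - q + p'` and `β^(p - q + p') = βⱼ`. This bound is
not a unit vector `eₖ` with `k ≥ j`, because `r ≠ 0` (all constant terms vanish) and `r` only
involves `z₁, …, z_{j-1}` (`Pᵢ` only involves `z₁, …, zᵢ`).
-/

open MvPolynomial

lemma constantCoeff_bind₁_eq_zero {R σ τ : Type*} [CommSemiring R] {f : σ → MvPolynomial τ R}
    (hf : ∀ i, constantCoeff (f i) = 0) {φ : MvPolynomial σ R} (hφ : constantCoeff φ = 0) :
    constantCoeff (bind₁ f φ) = 0 := by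
  have hf0 : (fun i => eval 0 (f i)) = 0 := funext fun i => by rw [eval_zero]; exact hf i
  rw [← eval_zero] at hφ ⊢
  exact (eval₂Hom_bind₁ (RingHom.id R) 0 f φ).trans (hf0 ▸ hφ)

section

variable {n : ℕ} (β : Fin n → ℂ)

lemma bpow_zero : bpow β 0 = 1 := by
  simp [bpow]

lemma bpow_add (p q : Fin n → ℕ) : bpow β (p + q) = bpow β p * bpow β q := by
  simp [bpow, pow_add, prod_mul_distrib]

lemma bpow_single (k : Fin n) : bpow β (Pi.single k 1) = β k := by
  rw [bpow, prod_eq_single k] <;> simp +contextual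

def weightDominated (w : ℂ) : Set (Fin n →₀ ℕ) :=
  {r | ∃ p, bpow β p = w ∧ ⇑r ≤ p}

def weightDominatedPolys (w : ℂ) : Submodule ℂ (MvPolynomial (Fin n) ℂ) :=
  restrictSupport ℂ (weightDominated β w)

def subResonantExponents (j : Fin n) : Set (Fin n →₀ ℕ) :=
  {r | ⇑r ∈ subResSet β j ∧ ∀ i, j ≤ i → r i = 0}

def subResonantPolys (j : Fin n) : Submodule ℂ (MvPolynomial (Fin n) ℂ) :=
  restrictSupport ℂ (subResonantExponents β j)

variable {β}

lemma add_mem_weightDominated {w w' : ℂ} {r r' : Fin n →₀ ℕ} (hr : r ∈ weightDominated β w)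
    (hr' : r' ∈ weightDominated β w') : r + r' ∈ weightDominated β (w * w') := by
  obtain ⟨p, rfl, hp⟩ := hr
  obtain ⟨p', rfl, hp'⟩ := hr'
  exact ⟨p + p', bpow_add β p p', by simpa using add_le_add hp hp'⟩

lemma subResonantExponents_subset_weightDominated (j : Fin n) :
    subResonantExponents β j ⊆ weightDominated β (β j) := by
  rintro r ⟨⟨-, p, ⟨hp, -⟩, hrp⟩, -⟩
  exact ⟨p, hp.symm, hrp⟩

lemma mem_subResonantExponents_of_mem_weightDominated {j : Fin n} {q r : Fin n →₀ ℕ}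
    (hq : ⇑q ∈ subResSet β j) (hr : r ∈ weightDominated β (bpow β q)) (hr0 : r ≠ 0)
    (hrj : ∀ i, j ≤ i → r i = 0) : r ∈ subResonantExponents β j := by
  obtain ⟨-, p, ⟨hpj, -⟩, hqp⟩ := hq
  obtain ⟨p', hp', hrp'⟩ := hr
  obtain ⟨l, hl⟩ : ∃ l, r l ≠ 0 := by simpa [Finsupp.ext_iff] using hr0
  refine ⟨⟨by simpa using hr0, p - q + p', ⟨?_, fun k hk hpk => ?_⟩, fun l => ?_⟩, hrj⟩
  · rw [bpow_add, hp', ← bpow_add, tsub_add_cancel_of_le hqp, hpj]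
  · have hrl : r l ≤ (p - q + p') l := le_add_left (hrp' l)
    rw [hpk] at hrl
    dsimp only at hrl
    split_ifs at hrl with hlk
    · exact hl (hrj l (hlk ▸ hk))
    · omega
  · exact le_add_left (hrp' l)

lemma subResonantPolys_le_weightDominatedPolys (j : Fin n) :
    subResonantPolys β j ≤ weightDominatedPolys β (β j) :=
  restrictSupport_mono ℂ (subResonantExponents_subset_weightDominated j)

lemma X_mem_weightDominatedPolys (i : Fin n) : X i ∈ weightDominatedPolys β (β i) := by
  rw [X, weightDominatedPolys, monomial_mem_restrictSupport]
  exact Or.inl ⟨Pi.single i 1, bpow_single β i, by simp [Finsupp.single_eq_pi_single]⟩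

lemma mul_mem_weightDominatedPolys {w w' : ℂ} {f g : MvPolynomial (Fin n) ℂ}
    (hf : f ∈ weightDominatedPolys β w) (hg : g ∈ weightDominatedPolys β w') :
    f * g ∈ weightDominatedPolys β (w * w') := by
  intro r hr
  obtain ⟨s, hs, t, ht, rfl⟩ := Finset.mem_add.mp (support_mul f g hr)
  exact add_mem_weightDominated (hf hs) (hg ht)

lemma prod_mem_weightDominatedPolys {ι : Type*} (s : Finset ι)
    {f : ι → MvPolynomial (Fin n) ℂ} {w : ι → ℂ}
    (hf : ∀ i ∈ s, f i ∈ weightDominatedPolys β (w i)) :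
    ∏ i ∈ s, f i ∈ weightDominatedPolys β (∏ i ∈ s, w i) := by
  classical
  induction s using Finset.induction_on with
  | empty =>
    rw [prod_empty, prod_empty, ← C_1, C_apply, weightDominatedPolys, monomial_mem_restrictSupport]
    exact Or.inl ⟨0, bpow_zero β, by simp⟩
  | insert i s hi ih =>
    rw [prod_insert hi, prod_insert hi]
    exact mul_mem_weightDominatedPolys (hf i (mem_insert_self i s))
      (ih fun k hk => hf k (mem_insert_of_mem hk))

lemma pow_mem_weightDominatedPolys {w : ℂ} {f : MvPolynomial (Fin n) ℂ}
    (hf : f ∈ weightDominatedPolys β w) (k : ℕ) :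
    f ^ k ∈ weightDominatedPolys β (w ^ k) := by
  simpa using prod_mem_weightDominatedPolys (range k) fun _ _ => hf

lemma bind₁_monomial_mem_weightDominatedPolys {f : Fin n → MvPolynomial (Fin n) ℂ}
    (hf : ∀ i, f i ∈ weightDominatedPolys β (β i)) (q : Fin n →₀ ℕ) (c : ℂ) :
    bind₁ f (monomial q c) ∈ weightDominatedPolys β (bpow β q) := by
  have hq : bpow β q = ∏ i ∈ q.support, β i ^ q i :=
    (Finsupp.prod_fintype q (fun i k => β i ^ k) fun _ => pow_zero _).symm
  rw [bind₁_monomial, C_mul', hq]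
  exact Submodule.smul_mem _ c
    (prod_mem_weightDominatedPolys _ fun i _ => pow_mem_weightDominatedPolys (hf i) _)

lemma lt_of_mem_vars_of_mem_subResonantPolys {j : Fin n} {S : MvPolynomial (Fin n) ℂ}
    (hS : S ∈ subResonantPolys β j) {i : Fin n} (hi : i ∈ S.vars) :
    i < j := by
  obtain ⟨r, hr, hir⟩ := (mem_vars_iff_mem_support i).1 hi
  by_contra hij
  exact Finsupp.mem_support_iff.1 hir ((hS hr).2 i (not_lt.1 hij))

lemma constantCoeff_eq_zero_of_mem_subResonantPolys {j : Fin n} {S : MvPolynomial (Fin n) ℂ}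
    (hS : S ∈ subResonantPolys β j) : constantCoeff S = 0 := by
  rw [constantCoeff_eq, ← notMem_support_iff]
  exact fun h => (hS h).1.1 rfl

theorem bind₁_mem_subResonantPolys {a : Fin n → ℂ}
    {S : Fin n → MvPolynomial (Fin n) ℂ} (hS : ∀ i, S i ∈ subResonantPolys β i)
    {j : Fin n} {T : MvPolynomial (Fin n) ℂ} (hT : T ∈ subResonantPolys β j) :
    bind₁ (fun i => C (a i) * X i + S i) T ∈ subResonantPolys β j := by
  set f := fun i => C (a i) * X i + S i
  have hf_weight i : f i ∈ weightDominatedPolys β (β i) := by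
    refine add_mem ?_ (subResonantPolys_le_weightDominatedPolys i (hS i))
    rw [C_mul']
    exact Submodule.smul_mem _ _ (X_mem_weightDominatedPolys i)
  have hf_vars i l (hl : l ∈ (f i).vars) : l ≤ i := by
    rcases Finset.mem_union.1 (vars_add_subset _ _ hl) with hl | hl
    · have hl := vars_mul _ _ hl
      simp only [vars_C, vars_X, empty_union, mem_singleton] at hl
      exact hl.le
    · exact (lt_of_mem_vars_of_mem_subResonantPolys (hS i) hl).le
  have hconst : constantCoeff (bind₁ f T) = 0 :=
    constantCoeff_bind₁_eq_zero
      (fun i => by simp [f, constantCoeff_eq_zero_of_mem_subResonantPolys (hS i)])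
      (constantCoeff_eq_zero_of_mem_subResonantPolys hT)
  intro r hr
  obtain ⟨q, hq, hrq⟩ : ∃ q ∈ T.support, r ∈ (bind₁ f (monomial q (coeff q T))).support := by
    rw [T.as_sum, map_sum] at hr
    exact Finset.mem_biUnion.1 (support_sum hr)
  refine mem_subResonantExponents_of_mem_weightDominated (hT hq).1
    (bind₁_monomial_mem_weightDominatedPolys hf_weight q _ hrq) ?_ fun i hji => ?_
  · rintro rfl
    exact mem_support_iff.1 hr (by rwa [← constantCoeff_eq])
  · by_contra hri
    have hi : i ∈ (bind₁ f T).vars := (mem_vars_iff_mem_support i).2 ⟨r, hr, by simpa using hri⟩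
    obtain ⟨k, hk, hik⟩ := mem_vars_bind₁ f T hi
    exact (hf_vars k i hik).not_gt ((lt_of_mem_vars_of_mem_subResonantPolys hT hk).trans_le hji)

variable (n) in
/-- `IsSubResonant` indexes coefficients by `Fin n → ℕ`, `MvPolynomial` by `Fin n →₀ ℕ`. -/
def expCoeffs : MvPolynomial (Fin n) ℂ ≃ ((Fin n → ℕ) →₀ ℂ) :=
  (AddMonoidAlgebra.coeffEquiv (R := ℂ) (M := Fin n →₀ ℕ)).trans
    (Finsupp.domCongr Finsupp.equivFunOnFinite).toEquiv

lemma coeff_expCoeffs_symm (c : (Fin n → ℕ) →₀ ℂ) (r : Fin n →₀ ℕ) :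
    coeff r ((expCoeffs n).symm c) = c r := rfl

lemma eval_expCoeffs_symm (c : (Fin n → ℕ) →₀ ℂ) (z : Fin n → ℂ) :
    eval z ((expCoeffs n).symm c) = c.sum fun q coef => coef * ∏ i, z i ^ q i := by
  rw [eval_eq', Finsupp.sum]
  refine Finset.sum_equiv Finsupp.equivFunOnFinite (fun r => ?_) fun r _ => ?_
  · rw [mem_support_iff, coeff_expCoeffs_symm, Finsupp.mem_support_iff]
    rfl
  · rw [coeff_expCoeffs_symm]
    rfl

lemma expCoeffs_symm_mem_subResonantPolys_iff {j : Fin n} (c : (Fin n → ℕ) →₀ ℂ) :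
    (expCoeffs n).symm c ∈ subResonantPolys β j ↔
      ∀ q, c q ≠ 0 → q ∈ subResSet β j ∧ ∀ i, j ≤ i → q i = 0 := by
  simp only [subResonantPolys, mem_restrictSupport_iff, Set.subset_def, Finset.mem_coe,
    mem_support_iff, coeff_expCoeffs_symm, subResonantExponents]
  exact Finsupp.equivFunOnFinite.forall_congr fun r => Iff.rfl

theorem isSubResonant_iff {P : (Fin n → ℂ) → (Fin n → ℂ)} :
    IsSubResonant β P ↔ ∃ (a : Fin n → ℂ) (S : Fin n → MvPolynomial (Fin n) ℂ), (∀ j, a j ≠ 0) ∧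
      (∀ j, S j ∈ subResonantPolys β j) ∧
      ∀ z j, P z j = a j * z j + eval z (S j) := by
  refine exists_congr fun a =>
    (Equiv.piCongrRight fun _ => (expCoeffs n).symm).exists_congr fun c => ?_
  simp only [Equiv.piCongrRight_apply, Pi.map_apply, expCoeffs_symm_mem_subResonantPolys_iff,
    eval_expCoeffs_symm]

end

theorem isSubResonant_comp_general {n : ℕ} (β : Fin n → ℂ)
    (P Ptilde : (Fin n → ℂ) → (Fin n → ℂ))
    (hP : IsSubResonant β P) (hPtilde : IsSubResonant β Ptilde) :
    IsSubResonant β (Ptilde ∘ P) := by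
  obtain ⟨a, S, ha, hS, hPS⟩ := isSubResonant_iff.1 hP
  obtain ⟨b, T, hb, hT, hPT⟩ := isSubResonant_iff.1 hPtilde
  set f := fun i => C (a i) * X i + S i
  have hf z : (fun i => eval z (f i)) = P z := funext fun i => by simp [f, hPS]
  refine isSubResonant_iff.2 ⟨b * a, fun j => b j • S j + bind₁ f (T j),
    fun j => mul_ne_zero (hb j) (ha j),
    fun j => add_mem (Submodule.smul_mem _ _ (hS j)) (bind₁_mem_subResonantPolys hS (hT j)),
    fun z j => ?_⟩
  have hbind : eval z (bind₁ f (T j)) = eval (P z) (T j) := by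
    rw [← hf z]
    exact eval₂Hom_bind₁ _ _ _ _
  rw [Function.comp_apply, hPT, hPS, map_add, smul_eval, hbind, Pi.mul_apply]
  ring

/-- `G^r_β` is closed under composition. -/
theorem isSubResonant_comp {n : ℕ} (β : Fin n → ℂ)
    (h1 : ∀ i, ‖β i‖ < 1)
    (hpos : ∀ i, 0 < ‖β i‖)
    (hmono : ∀ i j : Fin n, i ≤ j → ‖β j‖ ≤ ‖β i‖)
    (P Ptilde : (Fin n → ℂ) → (Fin n → ℂ))
    (hP : IsSubResonant β P) (hPtilde : IsSubResonant β Ptilde) :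
    IsSubResonant β (Ptilde ∘ P) :=
  isSubResonant_comp_general β P Ptilde hP hPtilde
end
end

section
/- For P ∈ G^r_β and z ∈ ℂⁿ, the map θ_{−P(z)} ∘ P ∘ θ_z (where θ_w is translation by w) is again an element of G^r_β. -/
open Finset

noncomputable section

/-!
Expanding each monomial `(w + z) ^ q` binomially, `P (w + z) - P z` keeps the linear part
`a j * w j`, and its nonlinear part consists of monomials `w ^ g` with `0 ≠ g ≤ q` for some
monomial `z ^ q` of `P`. Both conditions on the exponents of a sub-resonant map (lying in `𝒬ⱼ`
and involving only the variables before `j`) pass from `q` to such `g`.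
-/

namespace Monomials

variable {ι R : Type*} [Fintype ι] [CommRing R]

def eval (w : ι → R) : ((ι → ℕ) →₀ R) →ₗ[R] R :=
  Finsupp.linearCombination R fun q => ∏ i, w i ^ q i

theorem eval_apply (w : ι → R) (c : (ι → ℕ) →₀ R) :
    eval w c = c.sum fun q coef => coef * ∏ i, w i ^ q i :=
  Finsupp.linearCombination_apply R c

theorem eval_single (w : ι → R) (q : ι → ℕ) (coef : R) :
    eval w (Finsupp.single q coef) = coef * ∏ i, w i ^ q i :=
  Finsupp.linearCombination_single R coef q

variable [DecidableEq ι]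

/-- The coefficients of the polynomial `w ↦ (w + z) ^ q - z ^ q`, read off the binomial
expansion of each factor `(w i + z i) ^ q i`. -/
def translateMonomial (z : ι → R) (q : ι → ℕ) : (ι → ℕ) →₀ R :=
  ∑ g ∈ (Fintype.piFinset fun i => range (q i + 1)).erase 0,
    Finsupp.single g (∏ i, ((q i).choose (g i) : R) * z i ^ (q i - g i))

theorem eval_translateMonomial (z w : ι → R) (q : ι → ℕ) :
    eval w (translateMonomial z q) = ∏ i, (w i + z i) ^ q i - ∏ i, z i ^ q i := by
  have expand : ∏ i, (w i + z i) ^ q i = ∑ g ∈ Fintype.piFinset fun i => range (q i + 1),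
      (∏ i, ((q i).choose (g i) : R) * z i ^ (q i - g i)) * ∏ i, w i ^ g i := by
    simp_rw [add_pow, prod_univ_sum, ← prod_mul_distrib]
    refine sum_congr rfl fun g _ => prod_congr rfl fun i _ => by ring
  have zero_mem : (0 : ι → ℕ) ∈ Fintype.piFinset fun i => range (q i + 1) := by simp
  rw [translateMonomial, sum_erase_eq_sub zero_mem, map_sub, map_sum, expand]
  simp [eval_single]

theorem le_of_translateMonomial_ne_zero {z : ι → R} {q g : ι → ℕ}
    (h : translateMonomial z q g ≠ 0) : g ≠ 0 ∧ g ≤ q := by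
  have hg := Finsupp.support_finsetSum (Finsupp.mem_support_iff.2 h)
  simp only [mem_biUnion, mem_erase, Fintype.mem_piFinset, mem_range] at hg
  obtain ⟨g', ⟨hg'0, hg'q⟩, hg'⟩ := hg
  obtain rfl := Finset.mem_singleton.1 (Finsupp.support_single_subset hg')
  exact ⟨hg'0, fun i => Nat.le_of_lt_succ (hg'q i)⟩

def translate (z : ι → R) : ((ι → ℕ) →₀ R) →ₗ[R] (ι → ℕ) →₀ R :=
  Finsupp.linearCombination R (translateMonomial z)

theorem eval_translate (z w : ι → R) (c : (ι → ℕ) →₀ R) :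
    eval w (translate z c) = eval (w + z) c - eval z c := by
  induction c using Finsupp.induction_linear with
  | zero => simp
  | add c d hc hd => simp only [map_add, hc, hd]; ring
  | single q coef =>
    simp only [translate, Finsupp.linearCombination_single, map_smul, eval_translateMonomial,
      eval_single, Pi.add_apply, smul_eq_mul]
    ring

theorem exists_le_of_translate_ne_zero {z : ι → R} {c : (ι → ℕ) →₀ R} {g : ι → ℕ}
    (h : translate z c g ≠ 0) : g ≠ 0 ∧ ∃ q, c q ≠ 0 ∧ g ≤ q := by
  rw [translate, Finsupp.linearCombination_apply] at h
  have hg := Finsupp.support_sum (Finsupp.mem_support_iff.2 h)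
  simp only [mem_biUnion, Finsupp.mem_support_iff] at hg
  obtain ⟨q, hq, hgq⟩ := hg
  obtain ⟨hg0, hle⟩ := le_of_translateMonomial_ne_zero (right_ne_zero_of_smul hgq)
  exact ⟨hg0, q, hq, hle⟩

end Monomials

theorem mem_subResSet_of_le {n : ℕ} {β : Fin n → ℂ} {j : Fin n} {q g : Fin n → ℕ}
    (hq : q ∈ subResSet β j) (hg : g ≠ 0) (hgq : g ≤ q) : g ∈ subResSet β j := by
  obtain ⟨-, p, hp, hqp⟩ := hq
  exact ⟨hg, p, hp, fun l => (hgq l).trans (hqp l)⟩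

theorem isSubResonant_translation_conj_general {n : ℕ} (β : Fin n → ℂ)
    (P : (Fin n → ℂ) → (Fin n → ℂ)) (hP : IsSubResonant β P) (z : Fin n → ℂ) :
    IsSubResonant β (fun w => P (w + z) - P z) := by
  obtain ⟨a, c, ha, hc, hPc⟩ := hP
  refine ⟨a, fun j => Monomials.translate z (c j), ha, fun j g hg => ?_, fun w j => ?_⟩
  · obtain ⟨hg0, q, hq, hgq⟩ := Monomials.exists_le_of_translate_ne_zero hg
    obtain ⟨hq_res, hq_vars⟩ := hc j q hq
    exact ⟨mem_subResSet_of_le hq_res hg0 hgq,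
      fun i hi => Nat.eq_zero_of_le_zero (hq_vars i hi ▸ hgq i)⟩
  · simp only [Pi.sub_apply, hPc, ← Monomials.eval_apply, Monomials.eval_translate]
    rw [Pi.add_apply]
    ring

/-- for `P ∈ G^r_β` and `z ∈ ℂⁿ`, the map `θ_{−P(z)} ∘ P ∘ θ_z`
is again an element of `G^r_β`. -/
theorem isSubResonant_translation_conj {n : ℕ} (β : Fin n → ℂ)
    (h1 : ∀ i, ‖β i‖ < 1)
    (hpos : ∀ i, 0 < ‖β i‖)
    (hmono : ∀ i j : Fin n, i ≤ j → ‖β j‖ ≤ ‖β i‖)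
    (P : (Fin n → ℂ) → (Fin n → ℂ)) (hP : IsSubResonant β P) (z : Fin n → ℂ) :
    IsSubResonant β (fun w => P (w + z) - P z) :=
  isSubResonant_translation_conj_general β P hP z
end
end

section
/- Let u₀ : ℂⁿ → ℂⁿ be a lower-triangular invertible linear map with diagonal entries β₁,...,βₙ. Then the eigenvalues of the linear endomorphism P ↦ P ∘ u₀ of the space of homogeneous polynomials of degree k in n variables are exactly the products β^p over multi-indices p ∈ ℕⁿ with |p| = k. -/
/-!
Order monomials colexicographically, so that `X j ≺ X i` for `j < i`. Since `u₀` is lower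
triangular, the substitution `Xᵢ ↦ ∑ⱼ uᵢⱼ Xⱼ` sends `X^a` to `β^a X^a` plus colex-smaller
monomials of the same degree: it is triangular on the monomial basis. Comparing leading
coefficients in `P ∘ u₀ = μ P` gives `μ = β^p` for the leading exponent `p` of `P`. Conversely,
`P ↦ P ∘ u₀ - β^p P` maps the span of the degree-`k` monomials `≼ X^p` into the span of those
`≺ X^p`, a space of smaller dimension, so it has a nonzero kernel.
-/

open Finset MvPolynomial

noncomputable section

open scoped MonomialOrder

theorem LinearMap.exists_mem_ne_zero_apply_eq_zero_of_finrank_lt {K V : Type*} [Field K]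
    [AddCommGroup V] [Module K V] (f : V →ₗ[K] V) {W W' : Submodule K V}
    [FiniteDimensional K W] [FiniteDimensional K W'] (hf : W ≤ W'.comap f)
    (h : Module.finrank K W' < Module.finrank K W) : ∃ x ∈ W, x ≠ 0 ∧ f x = 0 := by
  obtain ⟨⟨x, hxW⟩, hx, hx0⟩ := Submodule.exists_mem_ne_zero_of_ne_bot
    (LinearMap.ker_ne_bot_of_finrank_lt (f := f.restrict hf) h)
  exact ⟨x, hxW, fun h => hx0 (Subtype.ext h), congrArg Subtype.val hx⟩

namespace MvPolynomial

theorem coeff_single_sum_C_mul_X {σ R : Type*} [Fintype σ] [CommSemiring R]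
    (c : σ → R) (i : σ) : coeff (Finsupp.single i 1) (∑ j, C (c j) * X j) = c i := by
  classical
  simp [coeff_sum, coeff_X, Finsupp.single_left_inj one_ne_zero]

theorem mem_restrictSupport_sdiff_singleton {σ R : Type*} [CommSemiring R]
    {s : Set (σ →₀ ℕ)} {a : σ →₀ ℕ} {P : MvPolynomial σ R} (hP : P ∈ restrictSupport R s)
    (ha : P.coeff a = 0) : P ∈ restrictSupport R (s \ {a}) :=
  fun _ hd => ⟨hP hd, fun had => mem_support_iff.mp hd (Set.mem_singleton_iff.mp had ▸ ha)⟩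

theorem finiteDimensional_restrictSupport {σ K : Type*} [Field K] {s : Set (σ →₀ ℕ)}
    (hs : s.Finite) : FiniteDimensional K (restrictSupport K s) :=
  have := hs.to_subtype
  Module.Finite.of_basis (basisRestrictSupport K s)

theorem finrank_restrictSupport {σ K : Type*} [Field K] (s : Set (σ →₀ ℕ)) :
    Module.finrank K (restrictSupport K s) = s.ncard := by
  rw [Module.finrank_eq_nat_card_basis (basisRestrictSupport K s), Nat.card_coe_set_eq]

end MvPolynomial

namespace MonomialOrder

variable {σ : Type*} [LinearOrder σ] [WellFoundedLT σ]

def colex : MonomialOrder σ where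
  syn := Colex (σ →₀ ℕ)
  toSyn := { toEquiv := toColex, map_add' := fun _ _ => rfl }
  toSyn_monotone := Finsupp.toColex_monotone

theorem colex_single_le_iff {a b : σ} :
    Finsupp.single a 1 ≼[colex] Finsupp.single b 1 ↔ a ≤ b :=
  Finsupp.Colex.single_le_iff

theorem colex_degree_sum_C_mul_X {R : Type*} [Fintype σ] [CommSemiring R] (c : σ → R) {i : σ}
    (hi : c i ≠ 0) (hc : ∀ j, i < j → c j = 0) :
    colex.degree (∑ j, C (c j) * X j) = Finsupp.single i 1 := by
  refine colex.toSyn.injective (le_antisymm ?_ (colex.le_degree ?_))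
  · refine colex.degree_sum_le.trans (Finset.sup_le fun j _ => ?_)
    rcases le_or_gt j i with hji | hij
    · rw [C_mul_X_eq_monomial]
      exact colex.degree_monomial_le _ |>.trans (colex_single_le_iff.mpr hji)
    · rw [hc j hij, C_0, zero_mul, colex.degree_zero, map_zero]
      exact bot_le
  · rwa [mem_support_iff, coeff_single_sum_C_mul_X]

end MonomialOrder

namespace MvPolynomial

section Triangular

variable {σ R : Type*} [Fintype σ] [CommSemiring R]

theorem aeval_monomial_eq_C_mul_prod (g : σ → MvPolynomial σ R) (a : σ →₀ ℕ) (c : R) :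
    aeval g (monomial a c) = C c * ∏ i, g i ^ a i := by
  rw [aeval_monomial, algebraMap_eq, Finsupp.prod_fintype _ _ fun _ => pow_zero _]

variable [IsReduced R] (m : MonomialOrder σ) {g : σ → MvPolynomial σ R}

theorem sum_degree_pow_eq (hg : ∀ i, m.degree (g i) = Finsupp.single i 1) (a : σ →₀ ℕ) :
    ∑ i, m.degree (g i ^ a i) = a := by
  simp only [m.degree_pow, hg, Finsupp.smul_single_one]
  exact Finsupp.univ_sum_single a

theorem degree_aeval_monomial_le (hg : ∀ i, m.degree (g i) = Finsupp.single i 1)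
    (a : σ →₀ ℕ) (c : R) : m.degree (aeval g (monomial a c)) ≼[m] a := by
  rw [aeval_monomial_eq_C_mul_prod, C_mul']
  calc m.toSyn (m.degree (c • ∏ i, g i ^ a i)) ≤ m.toSyn (∑ i, m.degree (g i ^ a i)) :=
        m.degree_smul_le.trans m.degree_prod_le
    _ = m.toSyn a := by rw [sum_degree_pow_eq m hg]

theorem coeff_aeval_monomial_self (hg : ∀ i, m.degree (g i) = Finsupp.single i 1)
    (a : σ →₀ ℕ) (c : R) :
    (aeval g (monomial a c)).coeff a = c * ∏ i, m.leadingCoeff (g i) ^ a i := by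
  have h := m.coeff_prod_sum_degree (fun i => g i ^ a i) univ
  rw [sum_degree_pow_eq m hg] at h
  simp only [aeval_monomial_eq_C_mul_prod, coeff_C_mul, h, m.leadingCoeff_pow]

theorem coeff_aeval_monomial_of_lt (hg : ∀ i, m.degree (g i) = Finsupp.single i 1)
    {a b : σ →₀ ℕ} (c : R) (hab : a ≺[m] b) : (aeval g (monomial a c)).coeff b = 0 :=
  m.coeff_eq_zero_of_lt ((degree_aeval_monomial_le m hg a c).trans_lt hab)

theorem coeff_degree_aeval (hg : ∀ i, m.degree (g i) = Finsupp.single i 1)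
    (P : MvPolynomial σ R) :
    (aeval g P).coeff (m.degree P) =
      m.leadingCoeff P * ∏ i, m.leadingCoeff (g i) ^ m.degree P i := by
  nth_rw 2 [P.as_sum]
  rw [map_sum, coeff_sum, Finset.sum_eq_single (m.degree P) (fun a ha hne => ?_) (fun h => ?_),
    coeff_aeval_monomial_self m hg, MonomialOrder.leadingCoeff]
  · exact coeff_aeval_monomial_of_lt m hg _
      (lt_of_le_of_ne (m.le_degree ha) (m.toSyn.injective.ne hne))
  · rw [notMem_support_iff.mp h, monomial_zero, map_zero, coeff_zero]

theorem support_aeval_monomial_subset (hg : ∀ i, m.degree (g i) = Finsupp.single i 1)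
    (hhom : ∀ i, (g i).IsHomogeneous 1) (b : σ →₀ ℕ) (c : R) :
    ↑(aeval g (monomial b c)).support ⊆ {d : σ →₀ ℕ | d.degree = b.degree ∧ d ≼[m] b} := by
  intro d hd
  have hb := (isHomogeneous_monomial (d := b) c rfl).aeval g hhom
  rw [one_mul] at hb
  exact ⟨of_not_not fun hdb => mem_support_iff.mp hd (hb.coeff_eq_zero hdb),
    (m.le_degree hd).trans (degree_aeval_monomial_le m hg b c)⟩

end Triangular

variable {σ : Type*} [Fintype σ] (m : MonomialOrder σ)

theorem eq_prod_leadingCoeff_pow_of_aeval_eq_smul {R : Type*} [CommRing R] [IsDomain R]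
    {g : σ → MvPolynomial σ R} (hg : ∀ i, m.degree (g i) = Finsupp.single i 1)
    {P : MvPolynomial σ R} (hP : P ≠ 0) {μ : R} (h : aeval g P = μ • P) :
    μ = ∏ i, m.leadingCoeff (g i) ^ m.degree P i := by
  have hc := coeff_degree_aeval m hg P
  rw [h, coeff_smul, smul_eq_mul, mul_comm] at hc
  exact mul_left_cancel₀ (m.leadingCoeff_ne_zero_iff.mpr hP) hc

theorem aeval_monomial_sub_smul_mem_restrictSupport {R : Type*} [CommRing R] [IsReduced R]
    {g : σ → MvPolynomial σ R} (hg : ∀ i, m.degree (g i) = Finsupp.single i 1)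
    (hhom : ∀ i, (g i).IsHomogeneous 1) {a b : σ →₀ ℕ} (hb : b.degree = a.degree ∧ b ≼[m] a) :
    aeval g (monomial b (1 : R)) - (∏ i, m.leadingCoeff (g i) ^ a i) • monomial b 1 ∈
      restrictSupport R ({d | d.degree = a.degree ∧ d ≼[m] a} \ {a}) := by
  classical
  refine mem_restrictSupport_sdiff_singleton ?_ ?_
  · refine Submodule.sub_mem _ ?_
      (Submodule.smul_mem _ _ ((monomial_mem_restrictSupport R).mpr (Or.inl hb)))
    exact (support_aeval_monomial_subset m hg hhom b 1).trans
      fun d hd => ⟨hd.1.trans hb.1, hd.2.trans hb.2⟩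
  · rw [coeff_sub, coeff_smul, coeff_monomial]
    by_cases hba : b = a
    · rw [hba, coeff_aeval_monomial_self m hg, if_pos rfl, one_mul, smul_eq_mul, mul_one,
        sub_self]
    · rw [coeff_aeval_monomial_of_lt m hg 1 (lt_of_le_of_ne hb.2 (m.toSyn.injective.ne hba)),
        if_neg hba, smul_zero, sub_zero]

theorem exists_mem_homogeneousSubmodule_aeval_eq_smul {K : Type*} [Field K]
    {g : σ → MvPolynomial σ K} (hg : ∀ i, m.degree (g i) = Finsupp.single i 1)
    (hhom : ∀ i, (g i).IsHomogeneous 1) (a : σ →₀ ℕ) :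
    ∃ P ∈ homogeneousSubmodule σ K a.degree, P ≠ 0 ∧
      aeval g P = (∏ i, m.leadingCoeff (g i) ^ a i) • P := by
  set S : Set (σ →₀ ℕ) := {b | b.degree = a.degree ∧ b ≼[m] a}
  set f := (aeval g).toLinearMap - (∏ i, m.leadingCoeff (g i) ^ a i) • LinearMap.id
  have hS : S.Finite := (Finsupp.finite_of_degree_eq _).subset fun b hb => hb.1
  have hmaps : restrictSupport K S ≤ (restrictSupport K (S \ {a})).comap f := by
    rw [restrictSupport_eq_span, Submodule.span_le]
    rintro _ ⟨b, hb, rfl⟩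
    exact aeval_monomial_sub_smul_mem_restrictSupport m hg hhom hb
  have := finiteDimensional_restrictSupport (K := K) hS
  have := finiteDimensional_restrictSupport (K := K) (hS.sdiff (t := {a}))
  obtain ⟨P, hPS, hP0, hfP⟩ := f.exists_mem_ne_zero_apply_eq_zero_of_finrank_lt hmaps (by
    simp only [finrank_restrictSupport]
    exact Set.ncard_sdiff_singleton_lt_of_mem ⟨rfl, le_rfl⟩ hS)
  refine ⟨P, ?_, hP0, sub_eq_zero.mp hfP⟩
  rw [homogeneousSubmodule_eq_finsupp_supported]
  exact restrictSupport_mono K (fun b hb => hb.1) hPS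

end MvPolynomial

/-- let `u₀` be a lower-triangular invertible linear map of ℂⁿ
with diagonal entries `β₁, ..., βₙ`. The eigenvalues of `P ↦ P ∘ u₀` on the
space of homogeneous polynomials of degree `k` in `n` variables are exactly the
products `β^p` with `|p| = k`. -/
theorem eigenvalues_of_composition_on_homogeneous {n k : ℕ} (β : Fin n → ℂ)
    (hβ : ∀ i, β i ≠ 0) (u : Matrix (Fin n) (Fin n) ℂ)
    (hdiag : ∀ i, u i i = β i)
    (htri : ∀ i j : Fin n, i < j → u i j = 0) :
    ∀ μ : ℂ,
      (∃ P : MvPolynomial (Fin n) ℂ,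
          P ∈ homogeneousSubmodule (Fin n) ℂ k ∧ P ≠ 0 ∧
          aeval (fun i => ∑ j, MvPolynomial.C (u i j) * MvPolynomial.X j) P
            = μ • P) ↔
      ∃ p : Fin n → ℕ, ∑ i, p i = k ∧ μ = bpow β p := by
  set g : Fin n → MvPolynomial (Fin n) ℂ := fun i => ∑ j, C (u i j) * X j
  have hdeg (i) : MonomialOrder.colex.degree (g i) = Finsupp.single i 1 :=
    MonomialOrder.colex_degree_sum_C_mul_X (u i) (hdiag i ▸ hβ i) (htri i)
  have hlc (i) : MonomialOrder.colex.leadingCoeff (g i) = β i := by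
    rw [MonomialOrder.leadingCoeff, hdeg, coeff_single_sum_C_mul_X, hdiag]
  have hhom (i) : (g i).IsHomogeneous 1 :=
    IsHomogeneous.sum _ _ _ fun j _ => isHomogeneous_C_mul_X (u i j) j
  intro μ
  constructor
  · rintro ⟨P, hPk, hP0, hP⟩
    refine ⟨MonomialOrder.colex.degree P, ?_, ?_⟩
    · rw [← Finsupp.degree_eq_sum]
      exact of_not_not fun h =>
        MonomialOrder.colex.coeff_degree_ne_zero_iff.mpr hP0 (hPk.coeff_eq_zero h)
    · simpa only [hlc, bpow] using eq_prod_leadingCoeff_pow_of_aeval_eq_smul _ hdeg hP0 hP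
  · rintro ⟨p, rfl, rfl⟩
    obtain ⟨P, hP, hP0, hPμ⟩ := exists_mem_homogeneousSubmodule_aeval_eq_smul _ hdeg hhom
      (Finsupp.equivFunOnFinite.symm p)
    simp only [hlc, Finsupp.degree_eq_sum, Finsupp.coe_equivFunOnFinite_symm] at hP hPμ
    exact ⟨P, hP, hP0, hPμ⟩
end
end
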